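/- For every integer k ≤ 0, the map [(k, x, w)] ↦ [(0, (x_1 + k, x_2, …, x_n), (w_1 − k, w_2, …, w_n))] (with ∞ − k := ∞) is a well-defined target-preserving bijection from (F_n)_k onto {g ∈ (F_n)_0 : the first coordinate of the source of g is ≥ −k}. -/
import Mathlib


/-! Common setup for the groupoid `F_n` of the quantum sphere `S_q^{2n+1}`. -/

/-- `x_i + w_i ≥ 0` for all `i` (vacuous at coordinates where `w_i = ∞`). -/
def okPos {n : ℕ} (x : Fin n → ℤ) (w : Fin n → ℕ∞) : Prop :=
  ∀ i, ∀ m : ℕ, w i = (m : ℕ∞) → 0 ≤ x i + (m : ℤ)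

/-- The defining condition of `F̃_n`: whenever `w_i = ∞`,
`x_i = -z - x_1 - ⋯ - x_{i-1}` and `x_j = 0` for `j > i`. -/
def condF {n : ℕ} (z : ℤ) (x : Fin n → ℤ) (w : Fin n → ℕ∞) : Prop :=
  ∀ i, w i = ⊤ → (x i = -z - ∑ j ∈ Finset.Iio i, x j) ∧ (∀ j, i < j → x j = 0)

/-- The set `F̃_n` of admissible triples `(z, x, w)`. -/
abbrev FTil (n : ℕ) : Type :=
  {p : ℤ × (Fin n → ℤ) × (Fin n → ℕ∞) // okPos p.2.1 p.2.2 ∧ condF p.1 p.2.1 p.2.2}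

/-- `ν(w)`: keep coordinates before the first `∞`, replace all later ones by `∞`. -/
def qnu {n : ℕ} (w : Fin n → ℕ∞) : Fin n → ℕ∞ :=
  fun i => if ∃ j, j ≤ i ∧ w j = ⊤ then ⊤ else w i

/-- Addition of an integer to an extended natural number (`a + ∞ = ∞`). -/
def addZN (a : ℤ) (b : ℕ∞) : ℕ∞ :=
  if b = ⊤ then ⊤ else (((a + (b.toNat : ℤ)).toNat : ℕ) : ℕ∞)

/-- Coordinatewise sum `x + w`. -/
def addxw {n : ℕ} (x : Fin n → ℤ) (w : Fin n → ℕ∞) : Fin n → ℕ∞ :=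
  fun i => addZN (x i) (w i)

/-- The relation `(z, x, w) ∼ (z', x', w')` iff `z = z'`, `x = x'`, `ν(w) = ν(w')`. -/
def FRel {n : ℕ} (a b : FTil n) : Prop :=
  a.val.1 = b.val.1 ∧ a.val.2.1 = b.val.2.1 ∧ qnu a.val.2.2 = qnu b.val.2.2

instance FSetoid (n : ℕ) : Setoid (FTil n) where
  r := FRel
  iseqv := ⟨fun _ => ⟨rfl, rfl, rfl⟩, fun h => ⟨h.1.symm, h.2.1.symm, h.2.2.symm⟩,
    fun h1 h2 => ⟨h1.1.trans h2.1, h1.2.1.trans h2.2.1, h1.2.2.trans h2.2.2⟩⟩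

/-- The groupoid `F_n = F̃_n / ∼`. -/
abbrev Fgpd (n : ℕ) : Type := Quotient (FSetoid n)

/-- The `z`-component of a class in `F_n`. -/
def qzp {n : ℕ} (g : Fgpd n) : ℤ :=
  Quotient.lift (fun a : FTil n => a.val.1) (fun a b h => (h : FRel a b).1) g

/-- The `x`-component of a class in `F_n`. -/
def qxp {n : ℕ} (g : Fgpd n) : Fin n → ℤ :=
  Quotient.lift (fun a : FTil n => a.val.2.1) (fun a b h => (h : FRel a b).2.1) g

/-- The source `ν(w)` of a class in `F_n`. -/
def qsrc {n : ℕ} (g : Fgpd n) : Fin n → ℕ∞ :=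
  Quotient.lift (fun a : FTil n => qnu a.val.2.2) (fun a b h => (h : FRel a b).2.2) g

/-- The target `ν(x + w)` of a class in `F_n` (computed on a representative). -/
noncomputable def qtgt {n : ℕ} (g : Fgpd n) : Fin n → ℕ∞ :=
  qnu (addxw g.out.val.2.1 g.out.val.2.2)

/-- `qIsMul g h p` states that the product `g · h` is defined and equals `p`:
the source of `g` equals the target of `h`, and `p = [(z + z', x + x', w')]`
(a class in `F_n` is determined by its `z`-, `x`-components and its source). -/
def qIsMul {n : ℕ} (g h p : Fgpd n) : Prop :=
  qsrc g = qtgt h ∧ qzp p = qzp g + qzp h ∧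
    (∀ i, qxp p i = qxp g i + qxp h i) ∧ qsrc p = qsrc h

/-- The subset `(F_n)_{k,j}` of classes of degree `k` whose source vanishes in the
first `j` coordinates. -/
def Fkj (n : ℕ) (k : ℤ) (j : ℕ) : Set (Fgpd n) :=
  {g : Fgpd n | qzp g = k ∧ ∀ i : Fin n, (i : ℕ) < j → qsrc g i = 0}

section Aux13

lemma addZN_top (a : ℤ) : addZN a ⊤ = ⊤ := by simp [addZN]

lemma addZN_coe (a : ℤ) (m : ℕ) : addZN a (m : ℕ∞) = (((a + (m : ℤ)).toNat : ℕ) : ℕ∞) := by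
  simp [addZN]

lemma addZN_eq_top_iff {a : ℤ} {b : ℕ∞} : addZN a b = ⊤ ↔ b = ⊤ := by
  unfold addZN; split <;> simp_all

lemma qnu_top_iff {n : ℕ} (w : Fin n → ℕ∞) (i : Fin n) :
    qnu w i = ⊤ ↔ ∃ j, j ≤ i ∧ w j = ⊤ := by
  unfold qnu; split
  · simp_all
  · rename_i h
    exact ⟨fun hw => ⟨i, le_refl i, hw⟩, fun hw => absurd hw h⟩

lemma exists_qnu_top {n : ℕ} (w : Fin n → ℕ∞) (i : Fin n) :
    (∃ j, j ≤ i ∧ qnu w j = ⊤) ↔ ∃ j, j ≤ i ∧ w j = ⊤ := by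
  constructor
  · rintro ⟨j, hj, hw⟩
    obtain ⟨j', hj', hw'⟩ := (qnu_top_iff w j).1 hw
    exact ⟨j', le_trans hj' hj, hw'⟩
  · rintro ⟨j, hj, hw⟩
    exact ⟨j, hj, (qnu_top_iff w j).2 ⟨j, le_refl j, hw⟩⟩

lemma qnu_eq_of_not_top {n : ℕ} (w : Fin n → ℕ∞) (i : Fin n)
    (h : ¬ ∃ j, j ≤ i ∧ w j = ⊤) : qnu w i = w i := by
  unfold qnu; rw [if_neg h]

lemma qnu_at_zero {n : ℕ} (w : Fin n → ℕ∞) (i : Fin n) (h : (i : ℕ) = 0) :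
    qnu w i = w i := by
  unfold qnu; split
  · rename_i hj; obtain ⟨j, hj1, hj2⟩ := hj
    have hji : j = i := Fin.ext (by have := Fin.le_def.1 hj1; omega)
    rw [hji] at hj2; rw [hj2]
  · rfl

lemma qnu_addxw_congr {n : ℕ} (x : Fin n → ℤ) {w w' : Fin n → ℕ∞} (h : qnu w = qnu w') :
    qnu (addxw x w) = qnu (addxw x w') := by
  have key : ∀ (v : Fin n → ℕ∞) (i : Fin n),
      qnu (addxw x v) i = if ∃ j, j ≤ i ∧ qnu v j = ⊤ then ⊤ else addZN (x i) (qnu v i) := by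
    intro v i
    by_cases hv : ∃ j, j ≤ i ∧ v j = ⊤
    · rw [if_pos ((exists_qnu_top v i).2 hv)]
      refine (qnu_top_iff _ i).2 ?_
      obtain ⟨j, hj, hw⟩ := hv
      exact ⟨j, hj, addZN_eq_top_iff.2 hw⟩
    · rw [if_neg (fun hc => hv ((exists_qnu_top v i).1 hc))]
      rw [qnu_eq_of_not_top _ i (by simpa [addxw, addZN_eq_top_iff] using hv),
        qnu_eq_of_not_top v i hv]
      rfl
  funext i
  rw [key w i, key w' i, h]

lemma qtgt_mk {n : ℕ} (a : FTil n) :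
    qtgt (⟦a⟧ : Fgpd n) = qnu (addxw a.val.2.1 a.val.2.2) := by
  have h : FRel (⟦a⟧ : Fgpd n).out a := Quotient.mk_out a
  unfold qtgt
  rw [h.2.1]
  exact qnu_addxw_congr _ h.2.2

lemma qnu_modw {n : ℕ} (c : ℤ) (w : Fin n → ℕ∞) :
    qnu (fun i => if (i : ℕ) = 0 then addZN c (w i) else w i)
      = fun i : Fin n => if (i : ℕ) = 0 then addZN c (qnu w i) else qnu w i := by
  funext i
  have htop : ∀ j : Fin n, (if (j : ℕ) = 0 then addZN c (w j) else w j) = ⊤ ↔ w j = ⊤ := by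
    intro j; split <;> simp [addZN_eq_top_iff]
  have hc : (∃ j, j ≤ i ∧ (if (j : ℕ) = 0 then addZN c (w j) else w j) = ⊤)
      ↔ ∃ j, j ≤ i ∧ w j = ⊤ := by
    constructor
    · rintro ⟨j, hj, hw⟩; exact ⟨j, hj, (htop j).mp hw⟩
    · rintro ⟨j, hj, hw⟩; exact ⟨j, hj, (htop j).mpr hw⟩
  by_cases hv : ∃ j, j ≤ i ∧ w j = ⊤
  · rw [show qnu (fun i => if (i : ℕ) = 0 then addZN c (w i) else w i) i = ⊤ from
      (qnu_top_iff _ i).2 (hc.2 hv)]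
    have hwtop : qnu w i = ⊤ := (qnu_top_iff w i).2 hv
    rw [hwtop]
    split <;> simp [addZN_top]
  · rw [qnu_eq_of_not_top _ i (fun h => hv (hc.1 h)), qnu_eq_of_not_top w i hv]

end Aux13

section Aux13b

lemma addZN_addZN {k : ℤ} (hk : k ≤ 0) (a : ℤ) (b : ℕ∞) :
    addZN (a + k) (addZN (-k) b) = addZN a b := by
  cases b with
  | top => rw [addZN_top, addZN_top, addZN_top]
  | coe m =>
    rw [addZN_coe, addZN_coe, addZN_coe]
    congr 1
    omega

lemma addZN_neg_addZN {k : ℤ} (b : ℕ∞) (hb : ((-k).toNat : ℕ∞) ≤ b) :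
    addZN (-k) (addZN k b) = b := by
  cases b with
  | top => rw [addZN_top, addZN_top]
  | coe m =>
    have hm : (-k).toNat ≤ m := by exact_mod_cast hb
    rw [addZN_coe, addZN_coe]
    congr 1
    omega

lemma le_addZN {k : ℤ} (b : ℕ∞) : ((-k).toNat : ℕ∞) ≤ addZN (-k) b := by
  cases b with
  | top => rw [addZN_top]; exact le_top
  | coe m =>
    rw [addZN_coe]
    exact_mod_cast (by omega : (-k).toNat ≤ (-k + (m : ℤ)).toNat)

lemma addZN_inj {c : ℤ} (hc : 0 ≤ c) {b b' : ℕ∞} (h : addZN c b = addZN c b') : b = b' := by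
  cases b with
  | top =>
    cases b' with
    | top => rfl
    | coe m' => rw [addZN_top, addZN_coe] at h; exact absurd h.symm (by simp)
  | coe m =>
    cases b' with
    | top => rw [addZN_top, addZN_coe] at h; exact absurd h (by simp)
    | coe m' =>
      rw [addZN_coe, addZN_coe] at h
      have : (c + (m : ℤ)).toNat = (c + (m' : ℤ)).toNat := by exact_mod_cast h
      congr 1
      omega

lemma sum_ite_zero {n : ℕ} (x : Fin n → ℤ) (c : ℤ) (i : Fin n) (hi : 0 < (i : ℕ)) :
    ∑ j ∈ Finset.Iio i, (if (j : ℕ) = 0 then x j + c else x j)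
      = (∑ j ∈ Finset.Iio i, x j) + c := by
  classical
  have hpt : ∀ j : Fin n, (if (j : ℕ) = 0 then x j + c else x j)
      = x j + (if j = (⟨0, i.pos⟩ : Fin n) then c else 0) := by
    intro j
    by_cases hj : (j : ℕ) = 0
    · rw [if_pos hj, if_pos (Fin.ext hj)]
    · rw [if_neg hj, if_neg (fun h => hj (by rw [h])), add_zero]
  rw [Finset.sum_congr rfl (fun j _ => hpt j), Finset.sum_add_distrib,
    Finset.sum_ite_eq' (Finset.Iio i) (⟨0, i.pos⟩ : Fin n) (fun _ => c),
    if_pos (by simpa [Finset.mem_Iio, Fin.lt_def] using hi)]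

lemma sum_iio_zero {n : ℕ} (x : Fin n → ℤ) (i : Fin n) (hi : (i : ℕ) = 0) :
    ∑ j ∈ Finset.Iio i, x j = 0 := by
  have : Finset.Iio i = ∅ := by
    ext j; simp [Finset.mem_Iio, Fin.lt_def, hi]
  rw [this, Finset.sum_empty]

/-- The map on representatives: `(z, x, w) ↦ (z - k, x + k·e₀, w - k·e₀)`. -/
def fmap (n : ℕ) (k : ℤ) (hk : k ≤ 0) (a : FTil n) : FTil n :=
  ⟨(a.val.1 - k,
    fun i => if (i : ℕ) = 0 then a.val.2.1 i + k else a.val.2.1 i,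
    fun i => if (i : ℕ) = 0 then addZN (-k) (a.val.2.2 i) else a.val.2.2 i),
   by
    constructor
    · -- okPos
      intro i m hm
      dsimp only at hm ⊢
      by_cases hi : (i : ℕ) = 0
      · rw [if_pos hi] at hm
        rw [if_pos hi]
        cases hv : a.val.2.2 i with
        | top => rw [hv, addZN_top] at hm; exact absurd hm (by simp)
        | coe m₀ =>
          rw [hv, addZN_coe] at hm
          have hm' : (-k + (m₀ : ℤ)).toNat = m := by exact_mod_cast hm
          have hbase : 0 ≤ a.val.2.1 i + (m₀ : ℤ) := a.prop.1 i m₀ hv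
          omega
      · rw [if_neg hi] at hm
        rw [if_neg hi]
        exact a.prop.1 i m hm
    · -- condF
      intro i hi
      dsimp only at hi ⊢
      by_cases hi0 : (i : ℕ) = 0
      · rw [if_pos hi0] at hi
        have hwt : a.val.2.2 i = ⊤ := addZN_eq_top_iff.1 hi
        obtain ⟨h1, h2⟩ := a.prop.2 i hwt
        constructor
        · rw [if_pos hi0, sum_iio_zero _ i hi0, h1, sum_iio_zero _ i hi0]
          ring
        · intro j hj
          have hj0 : (j : ℕ) ≠ 0 := by
            have := Fin.lt_def.1 hj; omega
          rw [if_neg hj0]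
          exact h2 j hj
      · rw [if_neg hi0] at hi
        obtain ⟨h1, h2⟩ := a.prop.2 i hi
        constructor
        · rw [if_neg hi0, sum_ite_zero _ k i (by omega), h1]
          ring
        · intro j hj
          have hj0 : (j : ℕ) ≠ 0 := by
            have := Fin.lt_def.1 hj; omega
          rw [if_neg hj0]
          exact h2 j hj⟩

lemma fmap_rel {n : ℕ} {k : ℤ} (hk : k ≤ 0) {a b : FTil n} (h : FRel a b) :
    FRel (fmap n k hk a) (fmap n k hk b) := by
  obtain ⟨h1, h2, h3⟩ := h
  refine ⟨by simp only [fmap, h1], by simp only [fmap, h2], ?_⟩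
  show qnu (fun i => if (i : ℕ) = 0 then addZN (-k) (a.val.2.2 i) else a.val.2.2 i)
      = qnu (fun i => if (i : ℕ) = 0 then addZN (-k) (b.val.2.2 i) else b.val.2.2 i)
  rw [qnu_modw, qnu_modw, h3]

end Aux13b

/-- For `k ≤ 0`, the map
`[(k, x, w)] ↦ [(0, (x₁ + k, x₂, …, x_n), (w₁ - k, w₂, …, w_n))]` (with `∞ - k = ∞`) is a
well-defined target-preserving bijection from `(F_n)_k` onto the set of degree-`0`
classes whose source has first coordinate `≥ -k`. -/
theorem stmt13 (n : ℕ) (hn : 1 ≤ n) (k : ℤ) (hk : k ≤ 0) :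
    ∃ φ : Fgpd n → Fgpd n,
      (∀ g : Fgpd n, qzp g = k →
        qzp (φ g) = 0 ∧
        (∀ i : Fin n, qxp (φ g) i = if (i : ℕ) = 0 then qxp g i + k else qxp g i) ∧
        (∀ i : Fin n, qsrc (φ g) i =
          if (i : ℕ) = 0 then addZN (-k) (qsrc g i) else qsrc g i) ∧
        qtgt (φ g) = qtgt g) ∧
      Set.BijOn φ {g : Fgpd n | qzp g = k}
        {g : Fgpd n | qzp g = 0 ∧ (((-k).toNat : ℕ∞)) ≤ qsrc g ⟨0, hn⟩} := by
  classical
  refine ⟨Quotient.map (fmap n k hk) (fun a b h => fmap_rel hk h), ?_, ?_, ?_, ?_⟩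
  · -- the four properties
    intro g hg
    induction g using Quotient.inductionOn with
    | h a =>
      have ha : a.val.1 = k := hg
      refine ⟨?_, ?_, ?_, ?_⟩
      · show a.val.1 - k = 0; omega
      · intro i; rfl
      · intro i
        show qnu (fun i => if (i : ℕ) = 0 then addZN (-k) (a.val.2.2 i) else a.val.2.2 i) i
          = if (i : ℕ) = 0 then addZN (-k) (qnu a.val.2.2 i) else qnu a.val.2.2 i
        rw [qnu_modw]
      · show qtgt (⟦fmap n k hk a⟧ : Fgpd n) = qtgt (⟦a⟧ : Fgpd n)
        rw [qtgt_mk, qtgt_mk]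
        have hxw : addxw (fmap n k hk a).val.2.1 (fmap n k hk a).val.2.2
            = addxw a.val.2.1 a.val.2.2 := by
          funext i
          show addZN (if (i : ℕ) = 0 then a.val.2.1 i + k else a.val.2.1 i)
            (if (i : ℕ) = 0 then addZN (-k) (a.val.2.2 i) else a.val.2.2 i)
          = addZN (a.val.2.1 i) (a.val.2.2 i)
          by_cases hi : (i : ℕ) = 0
          · rw [if_pos hi, if_pos hi, addZN_addZN hk]
          · rw [if_neg hi, if_neg hi]
        rw [hxw]
  · -- MapsTo
    intro g hg
    induction g using Quotient.inductionOn with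
    | h a =>
      have ha : a.val.1 = k := hg
      refine ⟨?_, ?_⟩
      · show a.val.1 - k = 0; omega
      · show ((-k).toNat : ℕ∞) ≤
          qnu (fun i => if (i : ℕ) = 0 then addZN (-k) (a.val.2.2 i) else a.val.2.2 i) ⟨0, hn⟩
        rw [qnu_modw]
        simpa using le_addZN (qnu a.val.2.2 ⟨0, hn⟩)
  · -- InjOn
    intro g hg h hh heq
    induction g using Quotient.inductionOn with
    | h a =>
      induction h using Quotient.inductionOn with
      | h b =>
        have hab : FRel (fmap n k hk a) (fmap n k hk b) := Quotient.exact heq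
        refine Quotient.sound ⟨?_, ?_, ?_⟩
        · have h1 := hab.1
          dsimp [fmap] at h1
          show a.val.1 = b.val.1
          omega
        · have h2 := hab.2.1
          dsimp [fmap] at h2
          funext i
          have h2i := congrFun h2 i
          by_cases hi : (i : ℕ) = 0
          · rw [if_pos hi, if_pos hi] at h2i; omega
          · rw [if_neg hi, if_neg hi] at h2i; exact h2i
        · have h3 := hab.2.2
          dsimp [fmap] at h3
          rw [qnu_modw, qnu_modw] at h3
          funext i
          have h3i := congrFun h3 i
          by_cases hi : (i : ℕ) = 0
          · rw [if_pos hi, if_pos hi] at h3i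
            exact addZN_inj (by omega) h3i
          · rw [if_neg hi, if_neg hi] at h3i; exact h3i
  · -- SurjOn
    intro h hh
    obtain ⟨hh0, hhle⟩ := hh
    have hout : (⟦h.out⟧ : Fgpd n) = h := Quotient.out_eq h
    set b : FTil n := h.out with hbdef
    have hb0 : b.val.1 = 0 := by rw [← hout] at hh0; exact hh0
    have hble : ((-k).toNat : ℕ∞) ≤ b.val.2.2 ⟨0, hn⟩ := by
      rw [← hout] at hhle
      have hq : qsrc (⟦b⟧ : Fgpd n) ⟨0, hn⟩ = b.val.2.2 ⟨0, hn⟩ := qnu_at_zero _ _ rfl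
      rwa [hq] at hhle
    have hok : okPos (fun i : Fin n => if (i : ℕ) = 0 then b.val.2.1 i + (-k) else b.val.2.1 i)
        (fun i : Fin n => if (i : ℕ) = 0 then addZN k (b.val.2.2 i) else b.val.2.2 i) := by
      intro i m hm
      dsimp only at hm ⊢
      by_cases hi : (i : ℕ) = 0
      · rw [if_pos hi] at hm
        rw [if_pos hi]
        have hieq : i = ⟨0, hn⟩ := Fin.ext hi
        cases hv : b.val.2.2 i with
        | top => rw [hv, addZN_top] at hm; exact absurd hm (by simp)
        | coe m₀ =>
          rw [hv, addZN_coe] at hm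
          have hm' : (k + (m₀ : ℤ)).toNat = m := by exact_mod_cast hm
          have hbase : 0 ≤ b.val.2.1 i + (m₀ : ℤ) := b.prop.1 i m₀ hv
          have hmk : (-k).toNat ≤ m₀ := by
            rw [hieq] at hv
            rw [hv] at hble
            exact_mod_cast hble
          omega
      · rw [if_neg hi] at hm
        rw [if_neg hi]
        exact b.prop.1 i m hm
    have hcond : condF k
        (fun i : Fin n => if (i : ℕ) = 0 then b.val.2.1 i + (-k) else b.val.2.1 i)
        (fun i : Fin n => if (i : ℕ) = 0 then addZN k (b.val.2.2 i) else b.val.2.2 i) := by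
      intro i hi
      dsimp only at hi ⊢
      by_cases hi0 : (i : ℕ) = 0
      · rw [if_pos hi0] at hi
        have hwt : b.val.2.2 i = ⊤ := addZN_eq_top_iff.1 hi
        obtain ⟨h1, h2⟩ := b.prop.2 i hwt
        constructor
        · rw [if_pos hi0, sum_iio_zero _ i hi0]
          rw [sum_iio_zero _ i hi0] at h1
          omega
        · intro j hj
          have hj0 : (j : ℕ) ≠ 0 := by
            have := Fin.lt_def.1 hj; omega
          rw [if_neg hj0]
          exact h2 j hj
      · rw [if_neg hi0] at hi
        obtain ⟨h1, h2⟩ := b.prop.2 i hi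
        constructor
        · rw [if_neg hi0, sum_ite_zero _ (-k) i (by omega), h1, hb0]
          ring
        · intro j hj
          have hj0 : (j : ℕ) ≠ 0 := by
            have := Fin.lt_def.1 hj; omega
          rw [if_neg hj0]
          exact h2 j hj
    refine ⟨⟦(⟨(k,
        fun i : Fin n => if (i : ℕ) = 0 then b.val.2.1 i + (-k) else b.val.2.1 i,
        fun i : Fin n => if (i : ℕ) = 0 then addZN k (b.val.2.2 i) else b.val.2.2 i),
        hok, hcond⟩ : FTil n)⟧, rfl, ?_⟩
    rw [← hout]
    refine Quotient.sound ⟨?_, ?_, ?_⟩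
    · show k - k = b.val.1
      omega
    · dsimp [fmap]
      funext i
      by_cases hi : (i : ℕ) = 0
      · rw [if_pos hi, if_pos hi]; ring
      · rw [if_neg hi, if_neg hi]
    · dsimp [fmap]
      refine congrArg qnu ?_
      funext i
      by_cases hi : (i : ℕ) = 0
      · rw [if_pos hi, if_pos hi]
        have hieq : i = ⟨0, hn⟩ := Fin.ext hi
        rw [hieq]
        exact addZN_neg_addZN _ hble
      · rw [if_neg hi, if_neg hi]
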